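/- arXiv:math/0106088 — 3 statements merged into one kernel-verified Lean document; each statement's English description precedes it below -/
import Mathlib

section
/- A nonzero trigonometric polynomial of degree at most n, i.e., a nonzero function of the form φ(t) = a_0 + Σ_{k=1}^n (a_k cos(kt) + b_k sin(kt)), has at most 2n zeros in the interval [0, 2π), counted with multiplicities. -/
open Real Set

/-- `f` vanishes to order at least `m` at `x`. -/
def VanishesToOrder (f : ℝ → ℝ) (x : ℝ) (m : ℕ) : Prop :=
  ∀ j < m, iteratedDeriv j f x = 0

/-- `f` has at most `N` zeros in `[0, 2π)`, counted with multiplicities: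
for any finite set of points of `[0, 2π)` at which `f` has a zero of (exact)
multiplicity `m x`, the sum of the multiplicities is at most `N`. -/
def ZerosAtMost (f : ℝ → ℝ) (N : ℕ) : Prop :=
  ∀ (s : Finset ℝ) (m : ℝ → ℕ),
    (∀ x ∈ s, x ∈ Set.Ico (0:ℝ) (2*π) ∧ 0 < m x ∧ VanishesToOrder f x (m x) ∧
      iteratedDeriv (m x) f x ≠ 0) →
    ∑ x ∈ s, m x ≤ N


/-! Since `cos kt` and `sin kt` are combinations of `e^{±ikt}`, a trigonometric polynomial of
degree `≤ n` is `φ t = e^{-int} P(e^{it})` for a complex polynomial `P` of degree `≤ 2n`, and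
`P ≠ 0` when `φ ≠ 0`. Differentiating `t ↦ e^{-ict} Q(e^{it})` gives a function of the same shape,
with `Q` replaced by `i (X Q' - c Q)`; the `k`-th iterate of this operator, applied to
`(X - w)^k R` and evaluated at `w`, is `k! (iw)^k R(w)`. Hence a zero of order `m` of `φ` at `x`
forces `(X - e^{ix})^m ∣ P`, and since `t ↦ e^{it}` is injective on `[0, 2π)` the multiplicities
add up to at most the number of roots of `P`, that is, at most `2n`. -/

open Polynomial Complex

theorem iteratedDeriv_ofReal_comp {f : ℝ → ℝ} {x : ℝ} {j : ℕ} (hf : ContDiffAt ℝ j f x) :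
    iteratedDeriv j (fun t => (f t : ℂ)) x = iteratedDeriv j f x := by
  simp only [iteratedDeriv]
  rw [show (fun t => (f t : ℂ)) = ofRealCLM ∘ f from rfl,
    ofRealCLM.iteratedFDeriv_comp_left hf le_rfl]
  simp

theorem Multiset.sum_count_le_card {α : Type*} [DecidableEq α] (s : Finset α) (M : Multiset α) :
    ∑ a ∈ s, M.count a ≤ Multiset.card M :=
  calc ∑ a ∈ s, M.count a ≤ ∑ a ∈ s ∪ M.toFinset, M.count a :=
        Finset.sum_le_sum_of_subset Finset.subset_union_left
    _ = Multiset.card M := Multiset.sum_count_eq_card fun a ha => by simp [ha]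

theorem Complex.exp_neg_mul_mul_exp_pow (c : ℂ) (j : ℕ) (t : ℝ) :
    cexp (-c * t * I) * cexp (t * I) ^ j = cexp ((j - c) * t * I) := by
  rw [← Complex.exp_nat_mul, ← Complex.exp_add]
  ring_nf

namespace Polynomial

noncomputable def twistedCircleEval (c : ℂ) (P : ℂ[X]) (t : ℝ) : ℂ :=
  cexp (-c * t * I) * P.eval (cexp (t * I))

noncomputable def twistedCircleDeriv (c : ℂ) (P : ℂ[X]) : ℂ[X] :=
  C I * (X * derivative P - C c * P)

variable (c : ℂ)

theorem contDiff_twistedCircleEval (P : ℂ[X]) {n : WithTop ℕ∞} :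
    ContDiff ℝ n (twistedCircleEval c P) := by
  have hP : ContDiff ℝ n (fun z : ℂ => P.eval z) := by
    simpa only [coe_aeval_eq_eval] using (P.contDiff_aeval (𝕜 := ℂ) n).restrict_scalars ℝ
  have hofReal : ContDiff ℝ n (fun t : ℝ => (t : ℂ)) := ofRealCLM.contDiff
  unfold twistedCircleEval
  fun_prop

theorem hasDerivAt_twistedCircleEval (P : ℂ[X]) (x : ℝ) :
    HasDerivAt (twistedCircleEval c P) (twistedCircleEval c (twistedCircleDeriv c P) x) x := by
  have hlin : ∀ d : ℂ, HasDerivAt (fun t : ℝ => d * t * I) (d * I) x := fun d => by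
    simpa using ((hasDerivAt_id x).ofReal_comp.const_mul d).mul_const I
  have hcirc : HasDerivAt (fun t : ℝ => cexp (t * I)) (cexp (x * I) * I) x := by
    simpa using (hlin 1).cexp
  refine ((hlin (-c)).cexp.mul ((P.hasDerivAt (cexp (x * I))).comp x hcirc)).congr_deriv ?_
  simp only [twistedCircleEval, twistedCircleDeriv, eval_mul, eval_sub, eval_C, eval_X,
    Function.comp_apply]
  ring

theorem iteratedDeriv_twistedCircleEval (j : ℕ) (P : ℂ[X]) :
    iteratedDeriv j (twistedCircleEval c P) =
      twistedCircleEval c ((twistedCircleDeriv c)^[j] P) := by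
  induction j generalizing P with
  | zero => simp
  | succ j ih =>
    rw [iteratedDeriv_succ', Function.iterate_succ_apply, ← ih,
      deriv_eq (hasDerivAt_twistedCircleEval c P)]

theorem eval_iterate_twistedCircleDeriv_X_sub_C_pow_mul (w : ℂ) (k : ℕ) (Q : ℂ[X]) :
    ((twistedCircleDeriv c)^[k] ((X - C w) ^ k * Q)).eval w =
      k.factorial * (I * w) ^ k * Q.eval w := by
  induction k generalizing Q with
  | zero => simp
  | succ k ih =>
    have hstep : twistedCircleDeriv c ((X - C w) ^ (k + 1) * Q) = (X - C w) ^ k *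
        (C I * (X * C ((k : ℂ) + 1) * Q + (X - C w) * (X * derivative Q - C c * Q))) := by
      simp only [twistedCircleDeriv, derivative_mul, derivative_pow, derivative_X_sub_C,
        Nat.add_sub_cancel, Nat.cast_add, Nat.cast_one, map_add, map_natCast, map_one]
      ring
    rw [Function.iterate_succ_apply, hstep, ih]
    simp only [eval_mul, eval_add, eval_sub, eval_C, eval_X, sub_self, zero_mul, add_zero,
      Nat.factorial_succ, Nat.cast_mul, Nat.cast_add, Nat.cast_one]
    ring

theorem pow_dvd_of_eval_iterate_twistedCircleDeriv {w : ℂ} (hw : w ≠ 0) {P : ℂ[X]} {m : ℕ}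
    (h : ∀ j < m, ((twistedCircleDeriv c)^[j] P).eval w = 0) : (X - C w) ^ m ∣ P := by
  induction m with
  | zero => simp
  | succ m ih =>
    obtain ⟨Q, rfl⟩ := ih fun j hj => h j (by omega)
    have hm := h m (by omega)
    rw [eval_iterate_twistedCircleDeriv_X_sub_C_pow_mul] at hm
    have hQ : Q.IsRoot w := by simpa [Nat.factorial_ne_zero, hw] using hm
    obtain ⟨R, rfl⟩ := dvd_iff_isRoot.mpr hQ
    exact ⟨R, by ring⟩

noncomputable def ofTrigCoeffs (n : ℕ) (a b : ℕ → ℝ) : ℂ[X] :=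
  C (a 0 : ℂ) * X ^ n + ∑ k ∈ Finset.Icc 1 n,
    (C ((a k - b k * I) / 2) * X ^ (n + k) + C ((a k + b k * I) / 2) * X ^ (n - k))

theorem natDegree_ofTrigCoeffs_le (n : ℕ) (a b : ℕ → ℝ) :
    (ofTrigCoeffs n a b).natDegree ≤ 2 * n := by
  refine (natDegree_add_le _ _).trans (max_le ?_ ?_)
  · exact (natDegree_C_mul_X_pow_le _ _).trans (by omega)
  refine natDegree_sum_le_of_forall_le _ _ fun k hk => (natDegree_add_le _ _).trans (max_le ?_ ?_)
  all_goals
    have := (Finset.mem_Icc.mp hk).2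
    exact (natDegree_C_mul_X_pow_le _ _).trans (by omega)

theorem twistedCircleEval_ofTrigCoeffs (n : ℕ) (a b : ℕ → ℝ) (t : ℝ) :
    twistedCircleEval n (ofTrigCoeffs n a b) t = ↑(a 0 + ∑ k ∈ Finset.Icc 1 n,
      (a k * Real.cos ((k:ℝ) * t) + b k * Real.sin ((k:ℝ) * t))) := by
  simp only [twistedCircleEval, ofTrigCoeffs, eval_add, eval_mul, eval_C, eval_pow, eval_X,
    eval_finsetSum, mul_add, Finset.mul_sum, mul_left_comm (cexp _), exp_neg_mul_mul_exp_pow]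
  push_cast
  congr 1
  · simp
  refine Finset.sum_congr rfl fun k hk => ?_
  rw [Nat.cast_sub (Finset.mem_Icc.mp hk).2,
    show ((n : ℂ) + k - n) * t * I = (k * t : ℂ) * I by ring,
    show ((n : ℂ) - k - n) * t * I = (-(k * t) : ℂ) * I by ring,
    Complex.exp_mul_I, Complex.exp_mul_I, Complex.cos_neg, Complex.sin_neg]
  linear_combination -(b k * Complex.sin (k * t)) * I_mul_I

end Polynomial

theorem ZerosAtMost.mono {f : ℝ → ℝ} {N N' : ℕ} (hf : ZerosAtMost f N) (hN : N ≤ N') :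
    ZerosAtMost f N' :=
  fun s m hs => (hf s m hs).trans hN

theorem zerosAtMost_of_ofReal_eq_twistedCircleEval {φ : ℝ → ℝ} {c : ℂ} {P : ℂ[X]}
    (hP : P ≠ 0) (hφ : ∀ t, (φ t : ℂ) = twistedCircleEval c P t) : ZerosAtMost φ P.natDegree := by
  classical
  intro s m hs
  have hsmooth : ContDiff ℝ ⊤ φ := by
    have : φ = fun t => (twistedCircleEval c P t).re := funext fun t => by rw [← hφ, ofReal_re]
    rw [this]
    exact reCLM.contDiff.comp (contDiff_twistedCircleEval c P)
  have hroot : ∀ x ∈ s, m x ≤ P.rootMultiplicity (cexp (x * I)) := by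
    intro x hx
    obtain ⟨-, -, hvanish, -⟩ := hs x hx
    refine (le_rootMultiplicity_iff hP).mpr
      (pow_dvd_of_eval_iterate_twistedCircleDeriv c (Complex.exp_ne_zero _) fun j hj => ?_)
    have h := iteratedDeriv_ofReal_comp (hsmooth.contDiffAt.of_le (by exact_mod_cast le_top))
      (x := x) (j := j)
    rw [hvanish j hj, funext hφ, iteratedDeriv_twistedCircleEval, twistedCircleEval] at h
    simpa [Complex.exp_ne_zero] using h
  have hinj : Set.InjOn (fun x : ℝ => cexp (x * I)) s := fun x hx y hy hxy =>
    Circle.exp_injOn_Ico (a := 0) (b := 2 * π) (by simp) (hs x hx).1 (hs y hy).1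
      (Subtype.ext (by simpa using hxy))
  calc ∑ x ∈ s, m x ≤ ∑ x ∈ s, P.rootMultiplicity (cexp (x * I)) := Finset.sum_le_sum hroot
    _ = ∑ w ∈ s.image fun x : ℝ => cexp (x * I), P.roots.count w := by
        rw [Finset.sum_image hinj]
        simp only [count_roots]
    _ ≤ P.natDegree := (Multiset.sum_count_le_card _ _).trans P.card_roots'

theorem trig_poly_zeros_at_most (n : ℕ) (a b : ℕ → ℝ) (φ : ℝ → ℝ)
    (hφ : ∀ t, φ t = a 0 + ∑ k ∈ Finset.Icc 1 n,
      (a k * Real.cos ((k:ℝ) * t) + b k * Real.sin ((k:ℝ) * t)))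
    (hne : φ ≠ 0) :
    ZerosAtMost φ (2 * n) := by
  set P := ofTrigCoeffs n a b
  have hφP : ∀ t, (φ t : ℂ) = twistedCircleEval n P t := fun t => by
    rw [hφ t, twistedCircleEval_ofTrigCoeffs]
  have hP : P ≠ 0 := fun h => hne <| funext fun t => by
    simpa [h, twistedCircleEval] using hφP t
  exact (zerosAtMost_of_ofReal_eq_twistedCircleEval hP hφP).mono
    (natDegree_ofTrigCoeffs_le n a b)
end

section
/- Let u be a nonvanishing 2π-periodic C^{2n} function whose Fourier coefficients a_k = ∫_0^{2π} u(t) cos(kt) dt and b_k = ∫_0^{2π} u(t) sin(kt) dt vanish for all 0 ≤ k ≤ n. Then u has at least 2n+2 zeros in [0, 2π). -/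
/-!
If `u` had at most `2n + 1` zeros in a period, it would change sign at an even number `2m ≤ 2n`
of points `c₁, …, c_{2m}` of the circle. The product `∏ sin ((t - cᵢ) / 2)` is a trigonometric
polynomial of degree `m ≤ n` with exactly these sign changes, so `u` times it has constant sign
and does not vanish identically; its integral over a period is then nonzero, contradicting the
vanishing of the Fourier coefficients of `u` up to order `n`.
-/

open Real Set

/- Writing `sin (k t)` as the phase-shifted cosine `cos (k t - π / 2)` makes the product of two
generators a sum of two generators. -/
noncomputable def trigPoly (n : ℕ) : Submodule ℝ (ℝ → ℝ) :=
  Submodule.span ℝ {f | ∃ k ≤ n, ∃ θ : ℝ, f = fun t => cos (k * t - θ)}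

theorem cos_mem_trigPoly {n k : ℕ} (hk : k ≤ n) (θ : ℝ) :
    (fun t => cos (k * t - θ)) ∈ trigPoly n :=
  Submodule.subset_span ⟨k, hk, θ, rfl⟩

theorem trigPoly_mono : Monotone trigPoly := fun _ _ h =>
  Submodule.span_mono fun _ ⟨k, hk, θ, hf⟩ => ⟨k, hk.trans h, θ, hf⟩

theorem one_mem_trigPoly (n : ℕ) : (1 : ℝ → ℝ) ∈ trigPoly n := by
  convert cos_mem_trigPoly (Nat.zero_le n) 0 using 1
  ext t
  simp

theorem cos_mul_cos_mem_trigPoly {j k n : ℕ} (hjk : j + k ≤ n) (α β : ℝ) :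
    (fun t => cos (j * t - α)) * (fun t => cos (k * t - β)) ∈ trigPoly n := by
  wlog hkj : k ≤ j generalizing j k α β
  · rw [mul_comm]
    exact this (by omega) β α (by omega)
  have hsum : (fun t => cos (j * t - α)) * (fun t => cos (k * t - β)) =
      (1 / 2 : ℝ) • (fun t => cos (((j + k : ℕ) : ℝ) * t - (α + β))) +
        (1 / 2 : ℝ) • (fun t => cos (((j - k : ℕ) : ℝ) * t - (α - β))) := by
    ext t
    rw [Pi.mul_apply, Pi.add_apply, Pi.smul_apply, Pi.smul_apply, smul_eq_mul, smul_eq_mul,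
      show ((j + k : ℕ) : ℝ) * t - (α + β) = (j * t - α) + (k * t - β) by push_cast; ring,
      show ((j - k : ℕ) : ℝ) * t - (α - β) = (j * t - α) - (k * t - β) by
        push_cast [Nat.cast_sub hkj]; ring,
      cos_add (j * t - α), cos_sub (j * t - α)]
    ring
  rw [hsum]
  exact add_mem (Submodule.smul_mem _ _ (cos_mem_trigPoly hjk _))
    (Submodule.smul_mem _ _ (cos_mem_trigPoly (by omega) _))

theorem trigPoly_mul_le (m n : ℕ) : trigPoly m * trigPoly n ≤ trigPoly (m + n) := by
  rw [trigPoly, trigPoly, Submodule.span_mul_span, Submodule.span_le]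
  rintro _ ⟨_, ⟨j, hj, α, rfl⟩, _, ⟨k, hk, β, rfl⟩, rfl⟩
  exact cos_mul_cos_mem_trigPoly (by omega) α β

theorem continuous_of_mem_trigPoly {n : ℕ} {f : ℝ → ℝ} (hf : f ∈ trigPoly n) : Continuous f := by
  induction hf using Submodule.span_induction with
  | mem f hf =>
    obtain ⟨k, -, θ, rfl⟩ := hf
    fun_prop
  | zero => exact continuous_zero
  | add f g _ _ hf hg => exact hf.add hg
  | smul c f _ hf => exact hf.const_smul c

theorem integral_mul_eq_zero_of_mem_trigPoly {n : ℕ} {u : ℝ → ℝ} {a b : ℝ}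
    (hu : IntervalIntegrable u MeasureTheory.volume a b)
    (hcos : ∀ k ≤ n, ∫ t in a..b, u t * cos (k * t) = 0)
    (hsin : ∀ k ≤ n, ∫ t in a..b, u t * sin (k * t) = 0)
    {f : ℝ → ℝ} (hf : f ∈ trigPoly n) : ∫ t in a..b, u t * f t = 0 := by
  have hint {g : ℝ → ℝ} (hg : g ∈ trigPoly n) : IntervalIntegrable (fun t => u t * g t) _ a b :=
    hu.mul_continuousOn (continuous_of_mem_trigPoly hg).continuousOn
  induction hf using Submodule.span_induction with
  | mem f hf =>
    obtain ⟨k, hk, θ, rfl⟩ := hf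
    have hexp : ∀ t, u t * cos (k * t - θ) =
        cos θ * (u t * cos (k * t)) + sin θ * (u t * sin (k * t)) := fun t => by
      rw [cos_sub]
      ring
    simp_rw [hexp]
    rw [intervalIntegral.integral_add, intervalIntegral.integral_const_mul,
      intervalIntegral.integral_const_mul, hcos k hk, hsin k hk]
    · ring
    all_goals exact (hu.mul_continuousOn (by fun_prop)).const_mul _
  | zero => simp
  | add f g hf hg ihf ihg =>
    simp only [Pi.add_apply, mul_add]
    rw [intervalIntegral.integral_add (hint hf) (hint hg), ihf, ihg, add_zero]
  | smul c f hf ihf =>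
    simp only [Pi.smul_apply, smul_eq_mul, mul_left_comm _ c]
    rw [intervalIntegral.integral_const_mul, ihf, mul_zero]

theorem sin_half_mul_sin_half_mem_trigPoly (a b : ℝ) :
    (fun t => sin ((t - a) / 2) * sin ((t - b) / 2)) ∈ trigPoly 1 := by
  have hsum : (fun t => sin ((t - a) / 2) * sin ((t - b) / 2)) =
      (1 / 2 : ℝ) • (fun t => cos (((0 : ℕ) : ℝ) * t - (a - b) / 2)) -
        (1 / 2 : ℝ) • (fun t => cos (((1 : ℕ) : ℝ) * t - (a + b) / 2)) := by
    ext t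
    rw [Pi.sub_apply, Pi.smul_apply, Pi.smul_apply, smul_eq_mul, smul_eq_mul,
      show ((0 : ℕ) : ℝ) * t - (a - b) / 2 = (t - a) / 2 - (t - b) / 2 by push_cast; ring,
      show ((1 : ℕ) : ℝ) * t - (a + b) / 2 = (t - a) / 2 + (t - b) / 2 by push_cast; ring,
      cos_sub, cos_add]
    ring
  rw [hsum]
  exact sub_mem (Submodule.smul_mem _ _ (cos_mem_trigPoly (Nat.zero_le 1) _))
    (Submodule.smul_mem _ _ (cos_mem_trigPoly le_rfl _))

theorem prod_sin_half_mem_trigPoly {m : ℕ} {s : Finset ℝ} (hs : s.card = 2 * m) :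
    (fun t => ∏ c ∈ s, sin ((t - c) / 2)) ∈ trigPoly m := by
  induction m generalizing s with
  | zero =>
    rw [Finset.card_eq_zero.1 hs]
    exact one_mem_trigPoly 0
  | succ m ih =>
    obtain ⟨a, s₁, has₁, rfl, hs₁⟩ := Finset.card_eq_succ.1 hs
    obtain ⟨b, s₂, hbs₂, rfl, hs₂⟩ := Finset.card_eq_succ.1 hs₁
    have hprod : (fun t => ∏ c ∈ insert a (insert b s₂), sin ((t - c) / 2)) =
        (fun t => sin ((t - a) / 2) * sin ((t - b) / 2)) *
          fun t => ∏ c ∈ s₂, sin ((t - c) / 2) := by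
      ext t
      rw [Finset.prod_insert has₁, Finset.prod_insert hbs₂, Pi.mul_apply, mul_assoc]
    rw [hprod, add_comm]
    exact trigPoly_mul_le 1 m
      (Submodule.mul_mem_mul (sin_half_mul_sin_half_mem_trigPoly a b) (ih (by omega)))

theorem prod_sin_half_add_two_pi (s : Finset ℝ) (t : ℝ) :
    ∏ c ∈ s, sin ((t + 2 * π - c) / 2) = (-1) ^ s.card * ∏ c ∈ s, sin ((t - c) / 2) := by
  rw [← Finset.prod_neg]
  refine Finset.prod_congr rfl fun c _ => ?_
  rw [show (t + 2 * π - c) / 2 = (t - c) / 2 + π by ring, sin_add_pi]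

theorem mul_sin_half_pos {x : ℝ} (hx₀ : x ≠ 0) (hx : |x| < 2 * π) : 0 < x * sin (x / 2) := by
  rw [abs_lt] at hx
  rcases hx₀.lt_or_gt with hneg | hpos
  · exact mul_pos_of_neg_of_neg hneg (sin_neg_of_neg_of_neg_pi_lt (by linarith) (by linarith))
  · exact mul_pos hpos (sin_pos_of_pos_of_lt_pi (by linarith) (by linarith))

theorem IsPreconnected.exists_pos_mul_of_ne_zero {X : Type*} [TopologicalSpace X] {S : Set X}
    {f : X → ℝ} (hS : IsPreconnected S) (hf : ContinuousOn f S) (hf₀ : ∀ x ∈ S, f x ≠ 0) :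
    ∃ ε ≠ 0, ∀ x ∈ S, 0 < ε * f x := by
  rcases S.eq_empty_or_nonempty with rfl | ⟨x₀, hx₀⟩
  · exact ⟨1, one_ne_zero, by simp⟩
  refine ⟨f x₀, hf₀ x₀ hx₀, fun x hx => ?_⟩
  by_contra! hle
  obtain ⟨y, hy, hy₀⟩ : ∃ y ∈ S, f y = 0 := by
    rcases mul_nonpos_iff.1 hle with ⟨h₀, h⟩ | ⟨h₀, h⟩
    · exact hS.intermediate_value₂ hx hx₀ hf continuousOn_const h h₀
    · exact hS.intermediate_value₂ hx₀ hx hf continuousOn_const h₀ h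
  exact hf₀ y hy hy₀

theorem exists_pos_mul_of_pos_mul_on_sides {s : Set ℝ} {g ψ : ℝ → ℝ} {z ε₁ ε₂ : ℝ}
    (hε₁ : ε₁ ≠ 0) (hε₂ : ε₂ ≠ 0) (hψ : ∀ t ∈ s, 0 < (t - z) * ψ t)
    (hleft : ∀ t ∈ s, t < z → 0 < ε₁ * g t) (hright : ∀ t ∈ s, z < t → 0 < ε₂ * g t) :
    ∃ ε ≠ 0, (∀ t ∈ s, 0 < ε * g t) ∨ ∀ t ∈ s, 0 < ε * (ψ t * g t) := by
  have hne : ∀ t ∈ s, t ≠ z := fun t ht htz => by simpa [htz] using hψ t ht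
  refine ⟨ε₂, hε₂, ?_⟩
  by_cases hsame : 0 < ε₁ * ε₂
  · refine Or.inl fun t ht => (hne t ht).lt_or_gt.elim (fun htz => ?_) (hright t ht)
    have hprod := mul_pos (hleft t ht htz) hsame
    exact pos_of_mul_pos_right (a := ε₁ ^ 2) (by linarith) (sq_nonneg ε₁)
  · have hopp : ε₁ * ε₂ < 0 := (not_lt.1 hsame).lt_of_ne (mul_ne_zero hε₁ hε₂)
    refine Or.inr fun t ht => (hne t ht).lt_or_gt.elim (fun htz => ?_) (fun htz => ?_)
    · have hψt : ψ t < 0 := neg_of_mul_pos_right (hψ t ht) (by linarith)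
      have hprod := mul_pos (hleft t ht htz) (mul_pos_of_neg_of_neg hopp hψt)
      exact pos_of_mul_pos_right (a := ε₁ ^ 2) (by linarith) (sq_nonneg ε₁)
    · have hψt : 0 < ψ t := pos_of_mul_pos_right (hψ t ht) (by linarith)
      have hprod := mul_pos hψt (hright t ht htz)
      linarith

theorem exists_pos_mul_prod_of_ne_zero {f : ℝ → ℝ} (φ : ℝ → ℝ → ℝ) {a b : ℝ} (Z : Finset ℝ)
    (hf : ContinuousOn f (Ioo a b)) (hf₀ : ∀ t ∈ Ioo a b, t ∉ Z → f t ≠ 0)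
    (hφ : ∀ c ∈ Z, ∀ t ∈ Ioo a b, t ≠ c → 0 < (t - c) * φ c t) :
    ∃ C ⊆ Z, ∃ ε ≠ 0, ∀ t ∈ Ioo a b, t ∉ Z → 0 < ε * (f t * ∏ c ∈ C, φ c t) := by
  induction Z using Finset.induction_on_max generalizing b with
  | empty =>
    obtain ⟨ε, hε, hpos⟩ := isPreconnected_Ioo.exists_pos_mul_of_ne_zero hf
      fun t ht => hf₀ t ht (Finset.notMem_empty t)
    exact ⟨∅, subset_rfl, ε, hε, fun t ht _ => by simpa using hpos t ht⟩
  | insert z Z hZz ih =>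
    have hφZ : ∀ c ∈ Z, ∀ t ∈ Ioo a b, t ≠ c → 0 < (t - c) * φ c t :=
      fun c hc => hφ c (Finset.mem_insert_of_mem hc)
    by_cases hz : z ∉ Ioo a b
    · have hnotZ : ∀ t ∈ Ioo a b, t ∉ Z → t ∉ insert z Z := fun t ht htZ => by
        simp [htZ, show t ≠ z by rintro rfl; exact hz ht]
      obtain ⟨C, hC, ε, hε, hpos⟩ :=
        ih hf (fun t ht htZ => hf₀ t ht (hnotZ t ht htZ)) hφZ
      exact ⟨C, hC.trans (Finset.subset_insert z Z), ε, hε,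
        fun t ht htZ => hpos t ht fun h => htZ (Finset.mem_insert_of_mem h)⟩
    rw [not_not] at hz
    have hsubl : Ioo a z ⊆ Ioo a b := Ioo_subset_Ioo_right hz.2.le
    have hsubr : Ioo z b ⊆ Ioo a b := Ioo_subset_Ioo_left hz.1.le
    have hZr : ∀ t ∈ Ioo z b, t ∉ insert z Z := fun t ht => by
      simpa [ht.1.ne'] using fun h => (hZz t h).not_gt ht.1
    obtain ⟨C, hC, ε₁, hε₁, hpos₁⟩ := ih (hf.mono hsubl)
      (fun t ht htZ => hf₀ t (hsubl ht) (by simp [htZ, ht.2.ne]))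
      fun c hc t ht => hφZ c hc t (hsubl ht)
    obtain ⟨ε₂, hε₂, hpos₂⟩ := isPreconnected_Ioo.exists_pos_mul_of_ne_zero (hf.mono hsubr)
      fun t ht => hf₀ t (hsubr ht) (hZr t ht)
    have hprod : ∀ t ∈ Ioo z b, 0 < ∏ c ∈ C, φ c t := fun t ht =>
      Finset.prod_pos fun c hc => have hct : c < t := (hZz c (hC hc)).trans ht.1
        pos_of_mul_pos_right (hφZ c (hC hc) t (hsubr ht) hct.ne') (sub_nonneg.2 hct.le)
    obtain ⟨ε, hε, hsign⟩ := exists_pos_mul_of_pos_mul_on_sides (s := Ioo a b \ ↑(insert z Z))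
      (g := fun t => f t * ∏ c ∈ C, φ c t) hε₁ hε₂
      (fun t ht => hφ z (Finset.mem_insert_self z Z) t ht.1 fun h => ht.2 (h ▸ by simp))
      (fun t ht htz => hpos₁ t ⟨ht.1.1, htz⟩ fun h => ht.2 (Finset.mem_insert_of_mem h))
      fun t ht hzt => by
        have := mul_pos (hpos₂ t ⟨hzt, ht.1.2⟩) (hprod t ⟨hzt, ht.1.2⟩)
        linarith
    rcases hsign with hsign | hsign
    · exact ⟨C, hC.trans (Finset.subset_insert z Z), ε, hε, fun t ht htZ => hsign t ⟨ht, htZ⟩⟩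
    · refine ⟨insert z C, Finset.insert_subset_insert z hC, ε, hε, fun t ht htZ => ?_⟩
      rw [Finset.prod_insert fun hzC => (hZz z (hC hzC)).false]
      have := hsign t ⟨ht, htZ⟩
      linarith

theorem exists_nonneg_mul_prod_sin_half {u : ℝ → ℝ} (hu : Continuous u) {a : ℝ} (Z : Finset ℝ)
    (hZ : ∀ t ∈ Ioo a (a + 2 * π), u t = 0 → t ∈ Z) :
    ∃ C : Finset ℝ, C.card ≤ Z.card ∧ ↑C ⊆ Ioo a (a + 2 * π) ∧ ∃ ε ≠ 0,
      ∀ t ∈ Icc a (a + 2 * π), 0 ≤ ε * (u t * ∏ c ∈ C, sin ((t - c) / 2)) := by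
  set Z' := Z.filter fun t => t ∈ Ioo a (a + 2 * π) ∧ u t = 0
  obtain ⟨C, hC, ε, hε, hpos⟩ := exists_pos_mul_prod_of_ne_zero (fun c t => sin ((t - c) / 2)) Z'
    hu.continuousOn (fun t ht htZ hut => htZ (Finset.mem_filter.2 ⟨hZ t ht hut, ht, hut⟩))
    fun c hc t ht htc => by
      have hc' := (Finset.mem_filter.1 hc).2.1
      exact mul_sin_half_pos (sub_ne_zero.2 htc)
        (abs_lt.2 ⟨by linarith [ht.1, hc'.2], by linarith [ht.2, hc'.1]⟩)
  refine ⟨C, (Finset.card_le_card hC).trans (Finset.card_filter_le _ _),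
    fun c hc => (Finset.mem_filter.1 (hC hc)).2.1, ε, hε, ?_⟩
  have hIoo : ∀ t ∈ Ioo a (a + 2 * π), 0 ≤ ε * (u t * ∏ c ∈ C, sin ((t - c) / 2)) := by
    intro t ht
    by_cases htZ : t ∈ Z'
    · simp [(Finset.mem_filter.1 htZ).2.2]
    · exact (hpos t ht htZ).le
  rw [← closure_Ioo (by linarith [pi_pos] : a ≠ a + 2 * π)]
  exact (isClosed_le continuous_const (by fun_prop :
    Continuous fun t => ε * (u t * ∏ c ∈ C, sin ((t - c) / 2)))).closure_subset_iff.2 hIoo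

theorem le_card_of_zeros_Ioo_subset {n : ℕ} {u : ℝ → ℝ} (hu : Continuous u)
    (huper : Function.Periodic u (2 * π))
    (horth : ∀ f ∈ trigPoly n, ∫ t in (0 : ℝ)..(2 * π), u t * f t = 0)
    {a : ℝ} (hua : u a ≠ 0) (Z : Finset ℝ) (hZ : ∀ t ∈ Ioo a (a + 2 * π), u t = 0 → t ∈ Z) :
    2 * n + 2 ≤ Z.card := by
  by_contra! hZcard
  obtain ⟨C, hCcard, hCI, ε, hε, hnonneg⟩ := exists_nonneg_mul_prod_sin_half hu Z hZ
  set S := fun t => ∏ c ∈ C, sin ((t - c) / 2) with hS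
  have hab : a ≤ a + 2 * π := by linarith [pi_pos]
  have hSa : S a ≠ 0 := Finset.prod_ne_zero_iff.2 fun c hc =>
    (sin_neg_of_neg_of_neg_pi_lt (by linarith [(hCI hc).1]) (by linarith [(hCI hc).2])).ne
  have hpos_a : 0 < ε * (u a * S a) :=
    (hnonneg a (left_mem_Icc.2 hab)).lt_of_ne (mul_ne_zero hε (mul_ne_zero hua hSa)).symm
  -- the endpoint values of `u` agree, those of the product differ by `(-1) ^ C.card`
  obtain ⟨m, hm⟩ : Even C.card := by
    by_contra hodd
    have hend := hnonneg (a + 2 * π) (right_mem_Icc.2 hab)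
    rw [huper a, prod_sin_half_add_two_pi, (Nat.not_even_iff_odd.1 hodd).neg_one_pow] at hend
    linarith
  have hSper : Function.Periodic S (2 * π) := fun t => by
    simp only [hS]
    rw [prod_sin_half_add_two_pi, hm, ← two_mul, (even_two_mul m).neg_one_pow, one_mul]
  have hS_mem : S ∈ trigPoly n :=
    trigPoly_mono (by omega : m ≤ n) (prod_sin_half_mem_trigPoly (by omega : C.card = 2 * m))
  have hzero : ∫ t in a..a + 2 * π, ε * (u t * S t) = 0 := by
    have hshift := (huper.mul hSper).intervalIntegral_add_eq a 0
    simp only [Pi.mul_apply, zero_add] at hshift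
    rw [intervalIntegral.integral_const_mul, hshift, horth S hS_mem, mul_zero]
  have hpos : 0 < ∫ t in a..a + 2 * π, ε * (u t * S t) :=
    intervalIntegral.integral_pos (by linarith [pi_pos]) (by fun_prop)
      (fun t ht => hnonneg t (Ioc_subset_Icc_self ht)) ⟨a, left_mem_Icc.2 hab, hpos_a⟩
  linarith

theorem le_card_of_zeros_Ico_subset {n : ℕ} {u : ℝ → ℝ} (hu : Continuous u)
    (huper : Function.Periodic u (2 * π))
    (horth : ∀ f ∈ trigPoly n, ∫ t in (0 : ℝ)..(2 * π), u t * f t = 0)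
    (F : Finset ℝ) (hF : ∀ x ∈ Ico 0 (2 * π), u x = 0 → x ∈ F) :
    2 * n + 2 ≤ F.card := by
  obtain ⟨a, ha, haF⟩ := (Set.Ico_infinite two_pi_pos).exists_notMem_finset F
  refine (le_card_of_zeros_Ioo_subset hu huper horth (fun hua => haF (hF a ha hua))
    (F.image (toIocMod two_pi_pos a)) fun t ht hut => ?_).trans Finset.card_image_le
  have hmod := huper.zsmul (toIcoDiv two_pi_pos 0 t) (toIcoMod two_pi_pos 0 t)
  rw [toIcoMod_add_toIcoDiv_zsmul, hut] at hmod
  refine Finset.mem_image.2 ⟨_, hF _ (toIcoMod_mem_Ico' _ t) hmod.symm, ?_⟩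
  rw [toIocMod_toIcoMod, toIocMod_eq_self]
  exact Ioo_subset_Ioc_self ht

theorem zeros_of_vanishing_fourier_coefficients_general (n : ℕ) (u : ℝ → ℝ)
    (huper : Function.Periodic u (2*π)) (hu : ContDiff ℝ (2*n : ℕ) u)
    (ha : ∀ k ≤ n, ∫ t in (0:ℝ)..(2*π), u t * Real.cos ((k:ℝ) * t) = 0)
    (hb : ∀ k ≤ n, ∫ t in (0:ℝ)..(2*π), u t * Real.sin ((k:ℝ) * t) = 0) :
    ∃ s : Finset ℝ, s.card = 2*n+2 ∧ ∀ x ∈ s, x ∈ Set.Ico (0:ℝ) (2*π) ∧ u x = 0 := by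
  have hc : Continuous u := hu.continuous
  have horth : ∀ f ∈ trigPoly n, ∫ t in (0 : ℝ)..(2 * π), u t * f t = 0 := fun f hf =>
    integral_mul_eq_zero_of_mem_trigPoly (hc.intervalIntegrable _ _) ha hb hf
  by_cases hfin : {x | x ∈ Ico (0 : ℝ) (2 * π) ∧ u x = 0}.Finite
  · obtain ⟨s, hs, hcard⟩ := Finset.exists_subset_card_eq <|
      le_card_of_zeros_Ico_subset hc huper horth hfin.toFinset fun x hx hux => by
        simp [hx.1, hx.2, hux]
    exact ⟨s, hcard, fun x hx => by simpa using hs hx⟩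
  · obtain ⟨s, hs, hcard⟩ := Set.Infinite.exists_subset_card_eq hfin (2 * n + 2)
    exact ⟨s, hcard, hs⟩

theorem zeros_of_vanishing_fourier_coefficients (n : ℕ) (u : ℝ → ℝ) (hune : u ≠ 0)
    (huper : Function.Periodic u (2*π)) (hu : ContDiff ℝ (2*n : ℕ) u)
    (ha : ∀ k ≤ n, ∫ t in (0:ℝ)..(2*π), u t * Real.cos ((k:ℝ) * t) = 0)
    (hb : ∀ k ≤ n, ∫ t in (0:ℝ)..(2*π), u t * Real.sin ((k:ℝ) * t) = 0) :
    ∃ s : Finset ℝ, s.card = 2*n+2 ∧ ∀ x ∈ s, x ∈ Set.Ico (0:ℝ) (2*π) ∧ u x = 0 :=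
  zeros_of_vanishing_fourier_coefficients_general n u huper hu ha hb
end

section
/- Let A be a Chebyshev space of order 2n+1 of 2π-periodic functions and let u be 2π-periodic and C^{2n}. If φ is the minimal function of u with respect to (p_1, ..., p_n) (the infimum of the one-parameter family of functions in A agreeing with u to order 2μ_i at each p_i and lying above u), then φ − u has total zero multiplicity at least 2n+2; in particular φ − u has at least one zero besides the points p_1, ..., p_n, or vanishes to higher order than 2μ_i at some p_i. -/
open Real Set

/-- A Chebyshev space of order `n`: a subspace of `C^{n-1}(ℝ)` of dimension at least `n`,
whose nonzero elements have at most `n-1` zeros counted with multiplicity in `[0, 2π)`,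
consisting of `2π`-periodic functions if `n` is odd and `2π`-antiperiodic functions if
`n` is even. -/
def IsChebyshev (A : Submodule ℝ (ℝ → ℝ)) (n : ℕ) : Prop :=
  (∀ f ∈ A, ContDiff ℝ (n - 1 : ℕ) f) ∧
  ((n : Cardinal) ≤ Module.rank ℝ A) ∧
  (∀ f ∈ A, f ≠ 0 → ZerosAtMost f (n - 1)) ∧
  (Odd n → ∀ f ∈ A, Function.Periodic f (2*π)) ∧
  (Even n → ∀ f ∈ A, Function.Antiperiodic f (2*π))

/-!
Let `f = φ - u ≥ 0` and suppose, for contradiction, that its zeros in a period have total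
multiplicity at most `2n + 1`. Then there are finitely many of them, and at each one the first
nonvanishing derivative of `f` has even order (as `f ≥ 0`), so the multiplicities add up to at
most `2n`. Since `dim A ≥ 2n + 1`, some `ψ ∈ A`, `ψ ≠ 0`, vanishes at every zero of `f` to the
order of `f` there. By Taylor's theorem `|ψ| = O(f)` near each zero, so by compactness and
periodicity `ε |ψ| ≤ f` for some `ε > 0`. Then `φ + εψ` and `φ - εψ` are both admissible, and
minimality of `φ` forces `ψ = 0`.
-/

open Filter Topology Asymptotics Function

/-- Taylor's theorem in Peano form. Only `f⁽ᵏ⁾` needs to be differentiable at `x`: a zero of a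
`C^{2n}` function may have order `2n + 1`. -/
theorem isLittleO_sub_mul_pow_of_hasDerivAt_iteratedDeriv {f : ℝ → ℝ} {x a : ℝ} {k : ℕ}
    (hf : ContDiff ℝ k f) (hvan : VanishesToOrder f x (k + 1))
    (hd : HasDerivAt (iteratedDeriv k f) a x) :
    (fun t => f t - a / (k + 1).factorial * (t - x) ^ (k + 1)) =o[𝓝 x]
      fun t => (t - x) ^ (k + 1) := by
  have hfx : f x = 0 := by simpa using hvan 0 k.succ_pos
  induction k generalizing f with
  | zero =>
    rw [iteratedDeriv_zero] at hd
    have h := hasDerivAt_iff_isLittleO.mp hd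
    simp only [hfx, sub_zero, smul_eq_mul] at h
    simpa [mul_comm] using h
  | succ k ih =>
    have hderiv := ih (f := deriv f) (by exact_mod_cast hf.deriv')
      (fun j hj => by simpa [← iteratedDeriv_succ'] using hvan (j + 1) (by omega))
      (by simpa [← iteratedDeriv_succ'] using hd) (by simpa using hvan 1 (by omega))
    have hdf : ∀ t, HasDerivAt f (deriv f t) t := fun t =>
      (hf.differentiable (by simp)).differentiableAt.hasDerivAt
    have hpoly : ∀ t, HasDerivAt (fun t => a / (k + 2).factorial * (t - x) ^ (k + 2))
        (a / (k + 1).factorial * (t - x) ^ (k + 1)) t := by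
      intro t
      refine ((((hasDerivAt_id t).sub_const x).fun_pow (k + 2)).const_mul _).congr_deriv ?_
      rw [Nat.factorial_succ (k + 1)]
      push_cast
      field_simp
      simp only [id]
      ring
    simpa [hfx] using convex_univ.isLittleO_pow_succ_real (mem_univ x)
      (fun t _ => ((hdf t).sub (hpoly t)).hasDerivWithinAt) (by simpa using hderiv)

theorem VanishesToOrder.isBigO_pow {f : ℝ → ℝ} {x : ℝ} {m : ℕ} (hf : ContDiff ℝ m f)
    (hvan : VanishesToOrder f x m) : f =O[𝓝 x] fun t => (t - x) ^ m := by
  cases m with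
  | zero => simpa using (hf.continuous.tendsto x).isBigO_one ℝ
  | succ k =>
    have hd : HasDerivAt (iteratedDeriv k f) (iteratedDeriv (k + 1) f x) x := by
      rw [iteratedDeriv_succ]
      exact ((hf.differentiable_iteratedDeriv k (by norm_cast; omega)) x).hasDerivAt
    have ho := isLittleO_sub_mul_pow_of_hasDerivAt_iteratedDeriv (by exact_mod_cast hf.of_succ)
      hvan hd
    simpa using ho.isBigO.add
      (isBigO_const_mul_self (iteratedDeriv (k + 1) f x / (k + 1).factorial) _ _)

theorem even_of_eventually_nonneg_mul_pow {x c : ℝ} {m : ℕ} (hc : c ≠ 0)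
    (h : ∀ᶠ t in 𝓝 x, 0 ≤ c * (t - x) ^ m) : Even m := by
  obtain ⟨δ, hδ, hball⟩ := Metric.eventually_nhds_iff.mp h
  by_contra hodd
  rw [Nat.not_even_iff_odd] at hodd
  have hright := hball (y := x + δ / 2) (by rw [Real.dist_eq, abs_of_pos] <;> linarith)
  have hleft := hball (y := x - δ / 2) (by rw [Real.dist_eq, abs_of_neg] <;> linarith)
  have hpow : 0 < (δ / 2) ^ m := by positivity
  rw [show x - δ / 2 - x = -(δ / 2) by ring, hodd.neg_pow] at hleft
  rw [add_sub_cancel_left] at hright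
  exact hc (by nlinarith)

theorem even_and_isBigO_of_isLittleO {f : ℝ → ℝ} {x c : ℝ} {m : ℕ} (hc : c ≠ 0)
    (hf0 : ∀ᶠ t in 𝓝 x, 0 ≤ f t)
    (ho : (fun t => f t - c * (t - x) ^ m) =o[𝓝 x] fun t => (t - x) ^ m) :
    Even m ∧ (fun t => (t - x) ^ m) =O[𝓝 x] f := by
  have hclose : ∀ᶠ t in 𝓝 x, |f t - c * (t - x) ^ m| ≤ |c| / 2 * |(t - x) ^ m| := by
    simpa using ho.def (half_pos (abs_pos.mpr hc))
  refine ⟨even_of_eventually_nonneg_mul_pow (x := x) hc ?_, IsBigO.of_bound (2 / |c|) ?_⟩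
  · filter_upwards [hclose, hf0] with t hclose hft
    rw [show |c| / 2 * |(t - x) ^ m| = |c * (t - x) ^ m| / 2 by rw [abs_mul]; ring,
      abs_le] at hclose
    cases abs_cases (c * (t - x) ^ m) <;> linarith
  · filter_upwards [hclose] with t hclose
    have habs := abs_sub_abs_le_abs_sub (c * (t - x) ^ m) (f t)
    rw [abs_sub_comm, abs_mul] at habs
    rw [Real.norm_eq_abs, Real.norm_eq_abs, div_mul_eq_mul_div, le_div_iff₀ (abs_pos.mpr hc)]
    nlinarith [abs_nonneg (f t)]

theorem even_and_isBigO_of_nonneg {f : ℝ → ℝ} {x : ℝ} {k : ℕ} (hf0 : ∀ᶠ t in 𝓝 x, 0 ≤ f t)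
    (hf : ContDiff ℝ k f) (hvan : VanishesToOrder f x (k + 1))
    (hne : iteratedDeriv (k + 1) f x ≠ 0) :
    Even (k + 1) ∧ (fun t => (t - x) ^ (k + 1)) =O[𝓝 x] f := by
  rw [iteratedDeriv_succ] at hne
  exact even_and_isBigO_of_isLittleO (div_ne_zero hne (by positivity)) hf0
    (isLittleO_sub_mul_pow_of_hasDerivAt_iteratedDeriv hf hvan
      (differentiableAt_of_deriv_ne_zero hne).hasDerivAt)

/-- The order of the first nonvanishing derivative of `f` at `x`; junk value `0` if all
derivatives vanish. -/
noncomputable def vanishingOrder (f : ℝ → ℝ) (x : ℝ) : ℕ :=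
  sInf {j | iteratedDeriv j f x ≠ 0}

section VanishingOrder

variable {f : ℝ → ℝ} {x : ℝ} {k N : ℕ}

theorem vanishesToOrder_one_of_eq_zero (hx : f x = 0) : VanishesToOrder f x 1 := by
  intro j hj
  rwa [Nat.lt_one_iff.mp hj, iteratedDeriv_zero]

theorem VanishesToOrder.mono {m : ℕ} (h : VanishesToOrder f x m) (hk : k ≤ m) :
    VanishesToOrder f x k :=
  fun j hj => h j (hj.trans_le hk)

theorem vanishesToOrder_vanishingOrder (f : ℝ → ℝ) (x : ℝ) :
    VanishesToOrder f x (vanishingOrder f x) :=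
  fun _ hj => not_not.mp (Nat.notMem_of_lt_sInf hj)

theorem exists_iteratedDeriv_ne_zero (h : ¬VanishesToOrder f x N) :
    ∃ j < N, iteratedDeriv j f x ≠ 0 := by
  simpa [VanishesToOrder] using h

theorem iteratedDeriv_vanishingOrder_ne_zero (h : ¬VanishesToOrder f x N) :
    iteratedDeriv (vanishingOrder f x) f x ≠ 0 := by
  obtain ⟨j, -, hj⟩ := exists_iteratedDeriv_ne_zero h
  exact Nat.sInf_mem (s := {j | iteratedDeriv j f x ≠ 0}) ⟨j, hj⟩

theorem vanishingOrder_lt (h : ¬VanishesToOrder f x N) : vanishingOrder f x < N := by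
  obtain ⟨j, hjN, hj⟩ := exists_iteratedDeriv_ne_zero h
  exact (Nat.sInf_le hj).trans_lt hjN

theorem VanishesToOrder.le_vanishingOrder (hk : VanishesToOrder f x k)
    (h : ¬VanishesToOrder f x N) : k ≤ vanishingOrder f x := by
  by_contra! hlt
  exact iteratedDeriv_vanishingOrder_ne_zero h (hk _ hlt)

theorem even_vanishingOrder_and_isBigO_of_nonneg {M : ℕ} (hf0 : ∀ t, 0 ≤ f t)
    (hf : ContDiff ℝ M f) (hx : f x = 0) (hfin : ¬VanishesToOrder f x (M + 2)) :
    Even (vanishingOrder f x) ∧ 0 < vanishingOrder f x ∧ vanishingOrder f x ≤ M + 1 ∧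
      (fun t => (t - x) ^ vanishingOrder f x) =O[𝓝 x] f := by
  have hne := iteratedDeriv_vanishingOrder_ne_zero hfin
  obtain ⟨k, hk⟩ : ∃ k, vanishingOrder f x = k + 1 :=
    Nat.exists_eq_succ_of_ne_zero fun h0 => hne (by rwa [h0, iteratedDeriv_zero])
  have hkM : k ≤ M := by have := vanishingOrder_lt hfin; omega
  have hvan := vanishesToOrder_vanishingOrder f x
  rw [hk] at hne hvan ⊢
  obtain ⟨heven, hO⟩ :=
    even_and_isBigO_of_nonneg (.of_forall hf0) (hf.of_le (by exact_mod_cast hkM)) hvan hne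
  exact ⟨heven, k.succ_pos, by omega, hO⟩

end VanishingOrder

namespace Function.Periodic

variable {f : ℝ → ℝ} {T : ℝ}

protected theorem iteratedDeriv (h : Periodic f T) (k : ℕ) : Periodic (iteratedDeriv k f) T := by
  intro x
  simpa [show (fun z => f (z + T)) = f from funext h] using
    (congrFun (iteratedDeriv_comp_add_const k f T) x).symm

theorem apply_toIcoMod {α : Type*} {g : ℝ → α} (h : Periodic g T) (hT : 0 < T) (a x : ℝ) :
    g (toIcoMod hT a x) = g x :=
  h.sub_zsmul_eq _

theorem vanishesToOrder_toIcoMod_iff (h : Periodic f T) (hT : 0 < T) (a x : ℝ) (m : ℕ) :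
    VanishesToOrder f (toIcoMod hT a x) m ↔ VanishesToOrder f x m := by
  simp only [VanishesToOrder, (h.iteratedDeriv _).apply_toIcoMod]

theorem vanishingOrder_toIcoMod (h : Periodic f T) (hT : 0 < T) (a x : ℝ) :
    vanishingOrder f (toIcoMod hT a x) = vanishingOrder f x := by
  simp only [vanishingOrder, (h.iteratedDeriv _).apply_toIcoMod]

end Function.Periodic

theorem IsCompact.exists_pos_mul_abs_le {K : Set ℝ} (hK : IsCompact K) {f ψ : ℝ → ℝ}
    (hf : Continuous f) (hψ : Continuous ψ) (hf0 : ∀ t, 0 ≤ f t)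
    (hO : ∀ x ∈ K, f x = 0 → ψ =O[𝓝 x] f) : ∃ ε > 0, ∀ t ∈ K, ε * |ψ t| ≤ f t := by
  -- The bound holds for `(ε, t)` near `(0, x)`; compactness makes it uniform in `t ∈ K`.
  have hloc : ∀ x ∈ K, ∀ᶠ z : ℝ × ℝ in 𝓝 (0, x), z.1 * |ψ z.2| ≤ f z.2 := by
    intro x hx
    rcases (hf0 x).eq_or_lt with hfx | hfx
    · obtain ⟨C, hC, hbound⟩ := (hO x hx hfx.symm).exists_pos
      rw [nhds_prod_eq]
      filter_upwards [(eventually_lt_nhds (inv_pos.2 hC)).prod_mk hbound.bound] with z ⟨hz1, hz2⟩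
      rw [Real.norm_eq_abs, Real.norm_eq_abs, abs_of_nonneg (hf0 _)] at hz2
      calc z.1 * |ψ z.2| ≤ C⁻¹ * |ψ z.2| := by gcongr
        _ ≤ f z.2 := by rw [inv_mul_le_iff₀ hC]; exact hz2
    · have hcont : Continuous fun z : ℝ × ℝ => z.1 * |ψ z.2| := by fun_prop
      exact ((hcont.tendsto (0, x)).eventually_lt ((hf.comp continuous_snd).tendsto (0, x))
        (by simpa using hfx)).mono fun _ => le_of_lt
  have huniform :=
    hK.eventually_forall_of_forall_eventually (P := fun ε t => ε * |ψ t| ≤ f t) hloc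
  obtain ⟨ε, hK', hε⟩ :=
    ((huniform.filter_mono nhdsWithin_le_nhds).and self_mem_nhdsWithin).exists (f := 𝓝[>] 0)
  exact ⟨ε, hε, hK'⟩

theorem Function.Periodic.exists_pos_mul_abs_le {T : ℝ} (hT : 0 < T) {f ψ : ℝ → ℝ}
    (hfT : Periodic f T) (hψT : Periodic ψ T) (hf : Continuous f) (hψ : Continuous ψ)
    (hf0 : ∀ t, 0 ≤ f t) (hO : ∀ x, f x = 0 → ψ =O[𝓝 x] f) :
    ∃ ε > 0, ∀ t, ε * |ψ t| ≤ f t := by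
  obtain ⟨ε, hε, h⟩ := (isCompact_Icc (a := 0) (b := T)).exists_pos_mul_abs_le hf hψ hf0
    fun x _ => hO x
  refine ⟨ε, hε, fun t => ?_⟩
  simpa only [hfT.apply_toIcoMod hT, hψT.apply_toIcoMod hT] using
    h (toIcoMod hT 0 t) (Ico_subset_Icc_self (toIcoMod_mem_Ico' hT t))

theorem Submodule.exists_ne_zero_forall_vanishesToOrder {A : Submodule ℝ (ℝ → ℝ)} {M : ℕ}
    (hA : ∀ g ∈ A, ContDiff ℝ M g) (s : Finset ℝ) (m : ℝ → ℕ) (hm : ∀ x ∈ s, m x ≤ M + 1)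
    (hrank : ((∑ x ∈ s, m x : ℕ) : Cardinal) < Module.rank ℝ A) :
    ∃ ψ ∈ A, ψ ≠ 0 ∧ ∀ x ∈ s, VanishesToOrder ψ x (m x) := by
  have hsmooth (g : A) (j : (x : s) × Fin (m x)) : ContDiffAt ℝ (j.2 : ℕ) (g : ℝ → ℝ) j.1 :=
    ((hA g g.2).of_le (by have := hm _ j.1.2; norm_cast; omega)).contDiffAt
  let jet : A →ₗ[ℝ] ((x : s) × Fin (m x) → ℝ) :=
    { toFun := fun g j => iteratedDeriv j.2 (g : ℝ → ℝ) (j.1 : ℝ)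
      map_add' := fun g h => funext fun j => iteratedDeriv_add (hsmooth g j) (hsmooth h j)
      map_smul' := fun c g => funext fun j => iteratedDeriv_const_smul_field c (g : ℝ → ℝ) }
  have hjet : ¬Function.Injective jet := fun hinj => by
    have := LinearMap.rank_le_of_injective jet hinj
    rw [rank_fun', Fintype.card_sigma] at this
    simp only [Fintype.card_fin, Finset.sum_coe_sort s m] at this
    exact hrank.not_ge this
  obtain ⟨g, hg, hg0⟩ : ∃ g, jet g = 0 ∧ g ≠ 0 := by
    simpa [injective_iff_map_eq_zero] using hjet
  exact ⟨g, g.2, fun h => hg0 (Subtype.ext h), fun x hx j hj => congrFun hg ⟨⟨x, hx⟩, ⟨j, hj⟩⟩⟩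

theorem finite_zeros_of_forall_sum_lt {f : ℝ → ℝ} {I : Set ℝ} {N : ℕ}
    (hfew : ∀ (s : Finset ℝ) (m : ℝ → ℕ),
      (∀ x ∈ s, x ∈ I ∧ 0 < m x ∧ VanishesToOrder f x (m x)) → ∑ x ∈ s, m x < N) :
    {x ∈ I | f x = 0}.Finite := by
  by_contra hinf
  obtain ⟨s, hsZ, hcard⟩ := Set.Infinite.exists_subset_card_eq hinf N
  have := hfew s (fun _ => 1) fun x hx =>
    ⟨(hsZ hx).1, one_pos, vanishesToOrder_one_of_eq_zero (hsZ hx).2⟩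
  simp [hcard] at this

theorem exists_dominated_of_forall_sum_lt {n : ℕ} {T : ℝ} (hT : 0 < T)
    {A : Submodule ℝ (ℝ → ℝ)} (hAC : ∀ g ∈ A, ContDiff ℝ (2 * n : ℕ) g)
    (hAT : ∀ g ∈ A, Periodic g T) (hArank : ((2 * n + 1 : ℕ) : Cardinal) ≤ Module.rank ℝ A)
    {f : ℝ → ℝ} (hf : ContDiff ℝ (2 * n : ℕ) f) (hfT : Periodic f T) (hf0 : ∀ t, 0 ≤ f t)
    (hfew : ∀ (s : Finset ℝ) (m : ℝ → ℕ),
      (∀ x ∈ s, x ∈ Ico 0 T ∧ 0 < m x ∧ VanishesToOrder f x (m x)) → ∑ x ∈ s, m x < 2 * n + 2) :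
    ∃ ψ ∈ A, ψ ≠ 0 ∧ (∃ ε > 0, ∀ t, ε * |ψ t| ≤ f t) ∧
      ∀ x k, k ≤ 2 * n → VanishesToOrder f x k → VanishesToOrder ψ x k := by
  set Z := (finite_zeros_of_forall_sum_lt hfew).toFinset
  have hZ (x : ℝ) (hx : x ∈ Z) : x ∈ Ico 0 T ∧ f x = 0 := by simpa [Z] using hx
  have hmemZ (x : ℝ) (hx : f x = 0) : toIcoMod hT 0 x ∈ Z := by
    simpa [Z, hfT.apply_toIcoMod, hx] using toIcoMod_mem_Ico' hT x
  have hfin (x : ℝ) (hx : f x = 0) : ¬VanishesToOrder f x (2 * n + 2) := fun hvan => by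
    have := hfew {toIcoMod hT 0 x} (fun _ => 2 * n + 2) (by
      simpa [hfT.vanishesToOrder_toIcoMod_iff] using ⟨toIcoMod_mem_Ico' hT x, hvan⟩)
    simp at this
  have hspec (x : ℝ) (hx : f x = 0) :=
    even_vanishingOrder_and_isBigO_of_nonneg hf0 hf hx (hfin x hx)
  have hord_le (x : ℝ) (hx : f x = 0) : vanishingOrder f x ≤ 2 * n := by
    obtain ⟨⟨r, hr⟩, -, hle, -⟩ := hspec x hx
    omega
  have hsum : ∑ x ∈ Z, vanishingOrder f x ≤ 2 * n := by
    have hlt := hfew Z (vanishingOrder f) fun x hx =>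
      ⟨(hZ x hx).1, (hspec x (hZ x hx).2).2.1, vanishesToOrder_vanishingOrder f x⟩
    obtain ⟨r, hr⟩ : Even (∑ x ∈ Z, vanishingOrder f x) :=
      Finset.even_sum _ fun x hx => (hspec x (hZ x hx).2).1
    omega
  obtain ⟨ψ, hψA, hψ0, hψZ⟩ := Submodule.exists_ne_zero_forall_vanishesToOrder hAC Z
    (vanishingOrder f) (fun x hx => (hord_le x (hZ x hx).2).trans (Nat.le_succ _))
    (lt_of_lt_of_le (by exact_mod_cast Nat.lt_succ_of_le hsum) hArank)
  have hψ (x : ℝ) (hx : f x = 0) : VanishesToOrder ψ x (vanishingOrder f x) := by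
    simpa [(hAT ψ hψA).vanishesToOrder_toIcoMod_iff, hfT.vanishingOrder_toIcoMod] using
      hψZ _ (hmemZ x hx)
  refine ⟨ψ, hψA, hψ0, hfT.exists_pos_mul_abs_le hT (hAT ψ hψA) hf.continuous
    (hAC ψ hψA).continuous hf0 fun x hx => ?_, fun x k hk hvan => ?_⟩
  · exact ((hψ x hx).isBigO_pow ((hAC ψ hψA).of_le (by exact_mod_cast hord_le x hx))).trans
      (hspec x hx).2.2.2
  · rcases Nat.eq_zero_or_pos k with rfl | hk0
    · exact fun j hj => absurd hj (Nat.not_lt_zero j)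
    have hx : f x = 0 := by simpa using hvan 0 hk0
    exact (hψ x hx).mono (hvan.le_vanishingOrder (hfin x hx))

theorem vanishesToOrder_sub_of_iteratedDeriv_eq {f g : ℝ → ℝ} {x : ℝ} {M m : ℕ}
    (hf : ContDiff ℝ M f) (hg : ContDiff ℝ M g) (hm : m ≤ M + 1)
    (h : ∀ k < m, iteratedDeriv k f x = iteratedDeriv k g x) :
    VanishesToOrder (fun t => f t - g t) x m := fun k hk => by
  have hkM : (k : WithTop ℕ∞) ≤ M := by exact_mod_cast (by omega : k ≤ M)
  rw [iteratedDeriv_fun_sub (hf.contDiffAt.of_le hkM) (hg.contDiffAt.of_le hkM), h k hk, sub_self]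

theorem VanishesToOrder.iteratedDeriv_add_smul {f g : ℝ → ℝ} {x : ℝ} {M m k : ℕ}
    (hvan : VanishesToOrder g x m) (hf : ContDiff ℝ M f) (hg : ContDiff ℝ M g) (hm : m ≤ M + 1)
    (s : ℝ) (hk : k < m) : iteratedDeriv k (f + s • g) x = iteratedDeriv k f x := by
  have hkM : (k : WithTop ℕ∞) ≤ M := by exact_mod_cast (by omega : k ≤ M)
  rw [iteratedDeriv_add (g := s • g) (hf.contDiffAt.of_le hkM)
      ((hg.const_smul s).contDiffAt.of_le hkM),
    iteratedDeriv_const_smul_field, hvan k hk, smul_zero, add_zero]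

theorem minimal_function_total_multiplicity (n : ℕ) (A : Submodule ℝ (ℝ → ℝ))
    (hA : IsChebyshev A (2*n+1))
    (u : ℝ → ℝ) (hu : ContDiff ℝ (2*n : ℕ) u) (hper : Function.Periodic u (2*π))
    (p : Fin n → ℝ) (μ : Fin n → ℕ)
    (hμ : ∀ i, μ i = Set.ncard {j : Fin n | p j = p i})
    (φ : ℝ → ℝ) (hφA : φ ∈ A)
    (hmatch : ∀ i, ∀ k < 2 * μ i, iteratedDeriv k φ (p i) = iteratedDeriv k u (p i))
    (hge : ∀ t, u t ≤ φ t)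
    (hmin : ∀ φ' : ℝ → ℝ, φ' ∈ A →
      (∀ i, ∀ k < 2 * μ i, iteratedDeriv k φ' (p i) = iteratedDeriv k u (p i)) →
      (∀ t, u t ≤ φ' t) → ∀ t, φ t ≤ φ' t) :
    ∃ (s : Finset ℝ) (m : ℝ → ℕ),
      (∀ x ∈ s, x ∈ Set.Ico (0:ℝ) (2*π) ∧ 0 < m x ∧
        VanishesToOrder (fun t => φ t - u t) x (m x)) ∧
      2*n+2 ≤ ∑ x ∈ s, m x := by
  by_contra! hfew
  obtain ⟨hAC, hArank, -, hAper, -⟩ := hA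
  have hAC' : ∀ g ∈ A, ContDiff ℝ (2 * n : ℕ) g := fun g hg => by simpa using hAC g hg
  have hAT : ∀ g ∈ A, Periodic g (2 * π) := hAper (odd_two_mul_add_one n)
  have hφ := hAC' φ hφA
  obtain ⟨ψ, hψA, hψ0, ⟨ε, hε, hψf⟩, hψvan⟩ := exists_dominated_of_forall_sum_lt two_pi_pos hAC'
    hAT (by exact_mod_cast hArank) (hφ.sub hu) ((hAT φ hφA).sub hper)
    (fun t => sub_nonneg.2 (hge t)) hfew
  have hμn (i : Fin n) : 2 * μ i ≤ 2 * n := by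
    have := (hμ i).trans_le ((Set.ncard_le_card _).trans_eq (Nat.card_fin n))
    omega
  have hψp (i : Fin n) : VanishesToOrder ψ (p i) (2 * μ i) :=
    hψvan _ _ (hμn i) (vanishesToOrder_sub_of_iteratedDeriv_eq hφ hu ((hμn i).trans (Nat.le_succ _))
      (hmatch i))
  have hle (s : ℝ) (hs : |s| ≤ ε) : ∀ t, φ t ≤ φ t + s * ψ t := by
    refine hmin (φ + s • ψ) (A.add_mem hφA (A.smul_mem s hψA)) (fun i k hk => ?_) (fun t => ?_)
    · rw [(hψp i).iteratedDeriv_add_smul hφ (hAC' ψ hψA) ((hμn i).trans (Nat.le_succ _)) s hk,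
        hmatch i k hk]
    · have : |s * ψ t| ≤ ε * |ψ t| := by
        rw [abs_mul]; exact mul_le_mul_of_nonneg_right hs (abs_nonneg _)
      simpa using by linarith [neg_abs_le (s * ψ t), hψf t]
  refine hψ0 (funext fun t => ?_)
  have := hle ε (abs_of_pos hε).le t
  have := hle (-ε) (by rw [abs_neg, abs_of_pos hε]) t
  simp only [Pi.zero_apply]
  nlinarith
end
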